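/- arXiv:2604.09476 — 4 statements merged into one kernel-verified Lean document; each statement's English description precedes it below -/
import Mathlib

section
/- Let R be a commutative ring, I ⊂ R an ideal, and f ∈ R a non-zero-divisor in R. Then (f,0) is a non-zero-divisor in the excision algebra R⊕I, and the canonical homomorphism (R⊕I)_{(f,0)} → R_f ⊕ I_f sending (r,i)/(f,0)^n to (r/f^n, i/f^n) is a ring isomorphism onto the excision algebra of R_f with respect to the ideal I_f. -/
open Matrix BigOperators

namespace Paper

/-! ### Linear groups -/

section Linear

variable (n : ℕ) (R : Type*) [CommRing R]

/-- The elementary matrix `e_{ij}(a) = 1 + a·E_{ij}`. -/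
def elemMat (i j : Fin n) (a : R) : Matrix (Fin n) (Fin n) R :=
  1 + Matrix.single i j a

/-- The elementary group `E_n(R)`, as a subgroup of `GL_n(R)`. -/
def E : Subgroup (GL (Fin n) R) :=
  Subgroup.closure
    { g | ∃ i j : Fin n, i ≠ j ∧ ∃ a : R,
        (g : Matrix (Fin n) (Fin n) R) = elemMat n R i j a }

/-- The relative elementary group `E_n(R, I)`:  generated by the conjugates
`ε e_{ij}(a) ε⁻¹` with `ε ∈ E_n(R)`, `a ∈ I`. -/
def Erel (I : Ideal R) : Subgroup (GL (Fin n) R) :=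
  Subgroup.closure
    { g | ∃ ε ∈ E n R, ∃ t : GL (Fin n) R,
        (∃ i j : Fin n, i ≠ j ∧ ∃ a ∈ I,
          (t : Matrix (Fin n) (Fin n) R) = elemMat n R i j a) ∧
        g = ε * t * ε⁻¹ }

/-- `g` is congruent to the identity matrix modulo the ideal `I`, entrywise. -/
def congOne (I : Ideal R) (g : GL (Fin n) R) : Prop :=
  ∀ i j, (g : Matrix (Fin n) (Fin n) R) i j - (1 : Matrix (Fin n) (Fin n) R) i j ∈ I

/-- The relative general linear group `GL_n(R, I)` (kernel of reduction mod `I`). -/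
def GLrel (I : Ideal R) : Set (GL (Fin n) R) := { g | congOne n R I g }

/-- The relative special linear group `SL_n(R, I)`. -/
def SLrel (I : Ideal R) : Set (GL (Fin n) R) :=
  { g | (g : Matrix (Fin n) (Fin n) R).det = 1 ∧ congOne n R I g }

end Linear

/-! ### Symplectic groups -/

section Symplectic

variable (m : ℕ) (R : Type*) [CommRing R]

/-- The standard symplectic form `χ`: block diagonal with blocks `[[0,1],[-1,0]]`
(0-indexed; intended for even `m`). -/
def chiMat : Matrix (Fin m) (Fin m) R :=
  Matrix.of fun i j =>
    if i.val % 2 = 0 ∧ j.val = i.val + 1 then (1 : R)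
    else if j.val % 2 = 0 ∧ i.val = j.val + 1 then -1 else 0

/-- The matrix `σ`: block diagonal with blocks `[[0,1],[1,0]]`. -/
def sigmaMat : Matrix (Fin m) (Fin m) R :=
  Matrix.of fun i j =>
    if (i.val % 2 = 0 ∧ j.val = i.val + 1) ∨ (j.val % 2 = 0 ∧ i.val = j.val + 1)
    then (1 : R) else 0

/-- The permutation `σ` with `σ(2k) = 2k+1`, `σ(2k+1) = 2k` (0-indexed; for even `m`
this is total; out-of-range values are irrelevant). -/
def sigmaPerm (i : Fin m) : Fin m :=
  if h : (if i.val % 2 = 0 then i.val + 1 else i.val - 1) < m then ⟨_, h⟩ else i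

/-- The elementary symplectic matrix `se_{ij}(a)`. -/
def seMat (i j : Fin m) (a : R) : Matrix (Fin m) (Fin m) R :=
  if i = sigmaPerm m j then 1 + Matrix.single i j a
  else 1 + Matrix.single i j a -
    Matrix.single (sigmaPerm m j) (sigmaPerm m i) ((-1 : R) ^ (i.val + j.val) * a)

/-- The elementary symplectic group `ESp_m(R)`. -/
def ESp : Subgroup (GL (Fin m) R) :=
  Subgroup.closure
    { g | ∃ i j : Fin m, i ≠ j ∧ ∃ a : R,
        (g : Matrix (Fin m) (Fin m) R) = seMat m R i j a }

/-- The relative elementary symplectic group `ESp_m(R, I)`. -/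
def ESprel (I : Ideal R) : Subgroup (GL (Fin m) R) :=
  Subgroup.closure
    { g | ∃ ε ∈ ESp m R, ∃ t : GL (Fin m) R,
        (∃ i j : Fin m, i ≠ j ∧ ∃ a ∈ I,
          (t : Matrix (Fin m) (Fin m) R) = seMat m R i j a) ∧
        g = ε * t * ε⁻¹ }

/-- The symplectic group `Sp_m(R)` as a set of invertible matrices. -/
def SpSet : Set (GL (Fin m) R) :=
  { g | (g : Matrix (Fin m) (Fin m) R)ᵀ * chiMat m R * (g : Matrix (Fin m) (Fin m) R) =
      chiMat m R }

/-- The relative symplectic group `Sp_m(R, I)`. -/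
def Sprel (I : Ideal R) : Set (GL (Fin m) R) :=
  { g | g ∈ SpSet m R ∧ congOne m R I g }

/-- The relative symplectic group `Sp_φ(R, I)` with respect to an alternating form `φ`. -/
def SpPhi (I : Ideal R) (φ : Matrix (Fin m) (Fin m) R) : Set (GL (Fin m) R) :=
  { g | congOne m R I g ∧
      (g : Matrix (Fin m) (Fin m) R)ᵀ * φ * (g : Matrix (Fin m) (Fin m) R) = φ }

end Symplectic

/-- The map `GL_n(R) → GL_n(S)` induced by a ring homomorphism `f : R →+* S`. -/
def mapGL {n : ℕ} {R S : Type*} [CommRing R] [CommRing S] (f : R →+* S) :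
    GL (Fin n) R →* GL (Fin n) S :=
  Units.map (RingHom.toMonoidHom (RingHom.mapMatrix f))

/-! ### Regular rings -/

/-- A (Noetherian) regular local ring: the maximal ideal is generated by
`Krull dimension`-many elements. -/
def IsRegularLocal (R : Type*) [CommRing R] : Prop :=
  IsNoetherianRing R ∧ ∃ hl : IsLocalRing R, ∃ s : Finset R,
    Ideal.span (s : Set R) = @IsLocalRing.maximalIdeal R _ hl ∧
      (s.card : WithBot (WithTop ℕ)) = ringKrullDim R

/-- A commutative ring is regular if all its localizations at primes are regular local. -/
def IsRegular (R : Type*) [CommRing R] : Prop :=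
  ∀ (p : Ideal R) (hp : p.IsPrime),
    IsRegularLocal (Localization (@Ideal.primeCompl R _ p hp))

/-! ### Unimodular rows -/

/-- The first standard basis row vector `e₁`. -/
def e1 (n : ℕ) (R : Type*) [CommRing R] : Fin n → R := fun i => if i.val = 0 then 1 else 0

/-- The set `Um_n(R, I)` of unimodular rows congruent to `e₁` mod `I`. -/
def Um (n : ℕ) (R : Type*) [CommRing R] (I : Ideal R) : Set (Fin n → R) :=
  { v | (∃ b : Fin n → R, ∑ i, v i * b i = 1) ∧ ∀ i, v i - e1 n R i ∈ I }

/-- The first row `e₁ · g` of an invertible matrix. -/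
def rowOne {n : ℕ} {R : Type*} [CommRing R] (g : GL (Fin n) R) : Fin n → R :=
  Matrix.vecMul (e1 n R) (g : Matrix (Fin n) (Fin n) R)

/-- `e₁ · G`: the set of first rows of the members of `G`. -/
def firstRows {n : ℕ} {R : Type*} [CommRing R] (G : Set (GL (Fin n) R)) :
    Set (Fin n → R) :=
  { v | ∃ g ∈ G, v = rowOne g }

/-! ### Stabilization of matrices -/

/-- `stab k A = I_k ⊥ A`, the block-diagonal matrix with identity block of size `k`
followed by `A`. -/
def stab {n : ℕ} {R : Type*} [CommRing R] (k : ℕ) (A : Matrix (Fin n) (Fin n) R) :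
    Matrix (Fin (n + k)) (Fin (n + k)) R :=
  Matrix.of fun i j =>
    if hi : i.val < k then (if i.val = j.val then 1 else 0)
    else if hj : j.val < k then 0
    else A ⟨i.val - k, by have := i.isLt; omega⟩ ⟨j.val - k, by have := j.isLt; omega⟩

/-- `stabTo N A = I_{N-n} ⊥ A`, the stabilization of `A` to size `N`. -/
def stabTo {n : ℕ} {R : Type*} [CommRing R] (N : ℕ) (A : Matrix (Fin n) (Fin n) R) :
    Matrix (Fin N) (Fin N) R :=
  Matrix.of fun i j =>
    if hi : i.val < N - n then (if i.val = j.val then 1 else 0)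
    else if hj : j.val < N - n then 0
    else if h2 : i.val - (N - n) < n ∧ j.val - (N - n) < n then
      A ⟨i.val - (N - n), h2.1⟩ ⟨j.val - (N - n), h2.2⟩
    else 0

/-! ### The excision algebra `R ⊕ I` -/

/-- The excision algebra `R ⊕ I`: underlying set `R × I`, with componentwise addition
and multiplication `(r,i)(s,j) = (rs, rj + si + ij)`. -/
structure Excision (R : Type*) [CommRing R] (I : Ideal R) where
  fst : R
  snd : R
  mem : snd ∈ I

namespace Excision

variable {R : Type*} [CommRing R] {I : Ideal R}

theorem ext' {a b : Excision R I} (h1 : a.fst = b.fst) (h2 : a.snd = b.snd) : a = b := by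
  cases a; cases b; simp_all

/-- The injection `R ⊕ I → R × R`, `(r, i) ↦ (r, r + i)`. -/
def toProd (a : Excision R I) : R × R := (a.fst, a.fst + a.snd)

theorem toProd_injective : Function.Injective (toProd (R := R) (I := I)) := by
  intro a b h
  have h1 : a.fst = b.fst := congrArg Prod.fst h
  have h2 : a.fst + a.snd = b.fst + b.snd := congrArg Prod.snd h
  refine ext' h1 ?_
  rw [h1] at h2
  exact add_left_cancel h2

instance : Zero (Excision R I) := ⟨⟨0, 0, I.zero_mem⟩⟩
instance : One (Excision R I) := ⟨⟨1, 0, I.zero_mem⟩⟩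
instance : Add (Excision R I) :=
  ⟨fun a b => ⟨a.fst + b.fst, a.snd + b.snd, I.add_mem a.mem b.mem⟩⟩
instance : Mul (Excision R I) :=
  ⟨fun a b => ⟨a.fst * b.fst, a.fst * b.snd + b.fst * a.snd + a.snd * b.snd,
    I.add_mem (I.add_mem (I.mul_mem_left _ b.mem) (I.mul_mem_left _ a.mem))
      (I.mul_mem_left _ b.mem)⟩⟩
instance : Neg (Excision R I) := ⟨fun a => ⟨-a.fst, -a.snd, I.neg_mem a.mem⟩⟩
instance : Sub (Excision R I) :=
  ⟨fun a b => ⟨a.fst - b.fst, a.snd - b.snd, I.sub_mem a.mem b.mem⟩⟩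
instance : SMul ℕ (Excision R I) :=
  ⟨fun c a => ⟨c • a.fst, c • a.snd, by
    rw [nsmul_eq_mul]; exact I.mul_mem_left _ a.mem⟩⟩
instance : SMul ℤ (Excision R I) :=
  ⟨fun c a => ⟨c • a.fst, c • a.snd, by
    rw [zsmul_eq_mul]; exact I.mul_mem_left _ a.mem⟩⟩
instance : Pow (Excision R I) ℕ := ⟨fun a c => npowRec c a⟩
instance : NatCast (Excision R I) := ⟨fun c => ⟨c, 0, I.zero_mem⟩⟩
instance : IntCast (Excision R I) := ⟨fun c => ⟨c, 0, I.zero_mem⟩⟩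

theorem toProd_mul (a b : Excision R I) : toProd (a * b) = toProd a * toProd b := by
  have h1 : (a * b).fst = a.fst * b.fst := rfl
  have h2 : (a * b).snd = a.fst * b.snd + b.fst * a.snd + a.snd * b.snd := rfl
  unfold toProd
  rw [h1, h2, Prod.mk_mul_mk]
  refine Prod.ext rfl ?_
  ring

instance instCommRing : CommRing (Excision R I) :=
  Function.Injective.commRing toProd toProd_injective
    (Prod.ext rfl (add_zero 0))
    (Prod.ext rfl (add_zero 1))
    (fun a b => Prod.ext rfl (by
      show (a + b).fst + (a + b).snd = (a.fst + a.snd) + (b.fst + b.snd)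
      show (a.fst + b.fst) + (a.snd + b.snd) = (a.fst + a.snd) + (b.fst + b.snd)
      ring))
    toProd_mul
    (fun a => Prod.ext rfl (by
      show (-a).fst + (-a).snd = -(a.fst + a.snd)
      show -a.fst + -a.snd = -(a.fst + a.snd)
      ring))
    (fun a b => Prod.ext rfl (by
      show (a - b).fst + (a - b).snd = (a.fst + a.snd) - (b.fst + b.snd)
      show (a.fst - b.fst) + (a.snd - b.snd) = (a.fst + a.snd) - (b.fst + b.snd)
      ring))
    (fun c a => Prod.ext rfl (by
      show (c • a).fst + (c • a).snd = c • (a.fst + a.snd)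
      show c • a.fst + c • a.snd = c • (a.fst + a.snd)
      rw [smul_add]))
    (fun c a => Prod.ext rfl (by
      show (c • a).fst + (c • a).snd = c • (a.fst + a.snd)
      show c • a.fst + c • a.snd = c • (a.fst + a.snd)
      rw [smul_add]))
    (fun a c => by
      induction c with
      | zero =>
        rw [pow_zero]
        have h0 : (a ^ 0 : Excision R I) = 1 := rfl
        rw [h0]
        exact Prod.ext rfl (add_zero 1)
      | succ c ih =>
        have hs : (a ^ (c + 1) : Excision R I) = a ^ c * a := rfl
        rw [hs, toProd_mul, ih, pow_succ])
    (fun c => Prod.ext rfl (add_zero _))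
    (fun c => Prod.ext rfl (add_zero _))

/-- The projection `R ⊕ I → R`, `(r, i) ↦ r`, as a ring homomorphism. -/
def fstHom (R : Type*) [CommRing R] (I : Ideal R) : Excision R I →+* R where
  toFun := Excision.fst
  map_one' := rfl
  map_mul' _ _ := rfl
  map_zero' := rfl
  map_add' _ _ := rfl

/-- The ring homomorphism `A ⊕ I_A → B ⊕ I_B` induced by `f : A →+* B` mapping
`I_A` into `I_B`. -/
def map {A B : Type*} [CommRing A] [CommRing B] {IA : Ideal A} {IB : Ideal B}
    (f : A →+* B) (hf : ∀ x, x ∈ IA → f x ∈ IB) : Excision A IA →+* Excision B IB where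
  toFun a := ⟨f a.fst, f a.snd, hf _ a.mem⟩
  map_one' := ext' (map_one f) (map_zero f)
  map_mul' a b := ext'
    (by show f (a.fst * b.fst) = f a.fst * f b.fst; rw [_root_.map_mul])
    (by
      show f (a.fst * b.snd + b.fst * a.snd + a.snd * b.snd) =
        f a.fst * f b.snd + f b.fst * f a.snd + f a.snd * f b.snd
      rw [_root_.map_add, _root_.map_add, _root_.map_mul, _root_.map_mul, _root_.map_mul])
  map_zero' := ext' (map_zero f) (map_zero f)
  map_add' a b := ext' (map_add f _ _) (map_add f _ _)

end Excision

/-- The lift `α_L` of a matrix `α ≡ 1 (mod I)` to the excision algebra `R ⊕ I`. -/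
def liftMat {R : Type*} [CommRing R] (I : Ideal R) {n : ℕ}
    (α : Matrix (Fin n) (Fin n) R)
    (h : ∀ i j, α i j - (1 : Matrix (Fin n) (Fin n) R) i j ∈ I) :
    Matrix (Fin n) (Fin n) (Excision R I) :=
  Matrix.of fun i j =>
    ⟨(1 : Matrix (Fin n) (Fin n) R) i j, α i j - (1 : Matrix (Fin n) (Fin n) R) i j, h i j⟩

/-! ### Analytic isomorphisms -/

/-- `φ : B →+* A` is an analytic isomorphism along `h ∈ B`. -/
def IsAnalyticIsoAlong {B A : Type*} [CommRing B] [CommRing A] (φ : B →+* A) (h : B) :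
    Prop :=
  h ∈ nonZeroDivisors B ∧ φ h ∈ nonZeroDivisors A ∧
    Function.Bijective
      (Ideal.quotientMap (Ideal.span {φ h}) φ
        (show Ideal.span {h} ≤ (Ideal.span {φ h}).comap φ from
          Ideal.span_le.mpr (Set.singleton_subset_iff.mpr
            (Ideal.mem_comap.mpr (Ideal.subset_span (Set.mem_singleton _))))))

/-! ### Condition P for real affine algebras -/

/-- A maximal ideal is real if the residue field is isomorphic to `ℝ`. -/
def realMax {A : Type*} [CommRing A] (m : Ideal A) : Prop :=
  m.IsMaximal ∧ Nonempty ((A ⧸ m) ≃+* ℝ)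

/-- Condition **P**: either there is no real maximal ideal,
or the intersection of all real maximal ideals has height at least one
(equivalently, is contained in no minimal prime). -/
def conditionP (A : Type*) [CommRing A] : Prop :=
  (∀ m : Ideal A, ¬ realMax m) ∨
    ∀ p ∈ minimalPrimes A, ¬ (sInf { m : Ideal A | realMax m } ≤ p)

/-! ### Alternating matrices, orthogonal sums and the Pfaffian -/

/-- Block-diagonal (orthogonal) sum of square matrices. -/
def osum {R : Type*} [CommRing R] {a b : ℕ}
    (A : Matrix (Fin a) (Fin a) R) (B : Matrix (Fin b) (Fin b) R) :
    Matrix (Fin (a + b)) (Fin (a + b)) R :=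
  Matrix.of fun i j =>
    if hi : i.val < a then
      (if hj : j.val < a then A ⟨i.val, hi⟩ ⟨j.val, hj⟩ else 0)
    else if hj : j.val < a then 0
    else B ⟨i.val - a, by have := i.isLt; omega⟩ ⟨j.val - a, by have := j.isLt; omega⟩

/-- The set `Alt'_{2n}(R, I)` of invertible alternating matrices congruent to `χ_n`
modulo `I`. -/
def altSet (n : ℕ) (R : Type*) [CommRing R] (I : Ideal R) :
    Set (Matrix (Fin (2 * n)) (Fin (2 * n)) R) :=
  { A | IsUnit A ∧ Aᵀ = -A ∧ (∀ i, A i i = 0) ∧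
      ∀ i j, A i j - chiMat (2 * n) R i j ∈ I }

/-- The Pfaffian of a `2n × 2n` matrix, via expansion along the first row. -/
def pfaffian {R : Type*} [CommRing R] :
    (n : ℕ) → Matrix (Fin (2 * n)) (Fin (2 * n)) R → R
  | 0, _ => 1
  | n + 1, A =>
      ∑ j : Fin (2 * n + 1),
        (-1 : R) ^ (j : ℕ) * A ⟨0, by omega⟩ ⟨j.val + 1, by have := j.isLt; omega⟩ *
          pfaffian n (A.submatrix
            (fun i => ⟨(j.succAbove i).val + 1, by have := (j.succAbove i).isLt; omega⟩)
            (fun i => ⟨(j.succAbove i).val + 1, by have := (j.succAbove i).isLt; omega⟩))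

/-- The set `Alt_{2n}(R, I)` of invertible alternating matrices congruent to `χ_n`
modulo `I` and with Pfaffian `1`. -/
def altSet1 (n : ℕ) (R : Type*) [CommRing R] (I : Ideal R) :
    Set (Matrix (Fin (2 * n)) (Fin (2 * n)) R) :=
  { A | A ∈ altSet n R I ∧ pfaffian n A = 1 }

/-- An even-sized square matrix (a representative for the elementary symplectic
Witt group). -/
structure PreAlt (R : Type*) [CommRing R] where
  n : ℕ
  mat : Matrix (Fin (2 * n)) (Fin (2 * n)) R

/-- Membership in `Alt'_{2n}(R,I)`. -/
def PreAlt.IsMem {R : Type*} [CommRing R] (I : Ideal R) (A : PreAlt R) : Prop :=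
  A.mat ∈ altSet A.n R I

/-- Orthogonal sum of representatives. -/
def PreAlt.osum {R : Type*} [CommRing R] (A B : PreAlt R) : PreAlt R :=
  ⟨A.n + B.n,
    Matrix.reindex (finCongr (show 2 * A.n + 2 * B.n = 2 * (A.n + B.n) by ring))
      (finCongr (show 2 * A.n + 2 * B.n = 2 * (A.n + B.n) by ring))
      (Paper.osum A.mat B.mat)⟩

/-- The representative `χ_n`. -/
def chiE (R : Type*) [CommRing R] (n : ℕ) : PreAlt R := ⟨n, chiMat (2 * n) R⟩

/-- The equivalence relation defining `W'_E(R,I)`:  `A ∼ B` iff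
`A ⊥ χ_{B.n+t} = εᵀ (B ⊥ χ_{A.n+t}) ε` for some `t` and `ε ∈ E_{2(A.n+B.n+t)}(R,I)`. -/
def altRel {R : Type*} [CommRing R] (I : Ideal R) (A B : PreAlt R) : Prop :=
  ∃ t : ℕ, ∃ ε ∈ Erel (2 * (A.n + B.n + t)) R I,
    Matrix.reindex
        (finCongr (show 2 * A.n + 2 * (B.n + t) = 2 * (A.n + B.n + t) by ring))
        (finCongr (show 2 * A.n + 2 * (B.n + t) = 2 * (A.n + B.n + t) by ring))
        (Paper.osum A.mat (chiMat (2 * (B.n + t)) R)) =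
      (ε : Matrix (Fin (2 * (A.n + B.n + t))) (Fin (2 * (A.n + B.n + t))) R)ᵀ *
        (Matrix.reindex
          (finCongr (show 2 * B.n + 2 * (A.n + t) = 2 * (A.n + B.n + t) by ring))
          (finCongr (show 2 * B.n + 2 * (A.n + t) = 2 * (A.n + B.n + t) by ring))
          (Paper.osum B.mat (chiMat (2 * (A.n + t)) R))) *
        (ε : Matrix (Fin (2 * (A.n + B.n + t))) (Fin (2 * (A.n + B.n + t))) R)

end Paper

open Paper

theorem mk_mem_ideal_map {R : Type*} [CommRing R] (I : Ideal R) (f : R) (i : R)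
    (hi : i ∈ I) (d : Submonoid.powers f) :
    Localization.mk i d ∈ I.map (algebraMap R (Localization.Away f)) := by
  have h : Localization.mk i d = Localization.mk i 1 * Localization.mk 1 d := by
    rw [Localization.mk_mul, mul_one, one_mul]
  rw [h, Localization.mk_one_eq_algebraMap]
  exact Ideal.mul_mem_right _ _ (Ideal.mem_map_of_mem _ hi)

/-! Multiplication by `(f, 0)` acts on both coordinates of `R ⊕ I` as multiplication by `f`,
so `R_f ⊕ I_f` satisfies the universal characterisation of the localization of `R ⊕ I` away
from `(f, 0)`: `(f, 0)` becomes a unit, every `(a / fⁿ, i / fᵐ)` is `(a fᵐ, i fⁿ) / (f, 0)ⁿ⁺ᵐ`,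
and two elements with the same image agree after multiplication by a power of `(f, 0)`. -/

namespace Paper.Excision

variable {R : Type*} [CommRing R] {I : Ideal R}

theorem snd_mul (a b : Excision R I) :
    (a * b).snd = a.fst * b.snd + b.fst * a.snd + a.snd * b.snd := rfl

theorem mk_zero_mul (r : R) (a : Excision R I) :
    (⟨r, 0, I.zero_mem⟩ : Excision R I) * a = ⟨r * a.fst, r * a.snd, I.mul_mem_left r a.mem⟩ :=
  ext' rfl (by rw [snd_mul]; ring)

theorem mk_zero_pow (r : R) (n : ℕ) :
    (⟨r, 0, I.zero_mem⟩ : Excision R I) ^ n = ⟨r ^ n, 0, I.zero_mem⟩ := by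
  induction n with
  | zero => exact ext' (pow_zero r).symm rfl
  | succ n ih =>
    rw [pow_succ', ih, mk_zero_mul]
    exact ext' (pow_succ' r n).symm (mul_zero r)

theorem mk_zero_mem_nonZeroDivisors {f : R} (hf : f ∈ nonZeroDivisors R) :
    (⟨f, 0, I.zero_mem⟩ : Excision R I) ∈ nonZeroDivisors (Excision R I) := by
  refine mem_nonZeroDivisors_iff_left.2 fun a ha => ?_
  rw [mk_zero_mul] at ha
  exact ext' (mem_nonZeroDivisors_iff_left.1 hf _ (congrArg fst ha))
    (mem_nonZeroDivisors_iff_left.1 hf _ (congrArg snd ha))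

variable {S : Type*} [CommRing S] [Algebra R S]

instance : Algebra (Excision R I) (Excision S (I.map (algebraMap R S))) :=
  (map (algebraMap R S) fun _ hx => Ideal.mem_map_of_mem _ hx).toAlgebra

theorem algebraMap_mk_zero (r : R) :
    algebraMap (Excision R I) (Excision S (I.map (algebraMap R S))) ⟨r, 0, I.zero_mem⟩ =
      ⟨algebraMap R S r, 0, Ideal.zero_mem _⟩ :=
  ext' rfl (map_zero _)

instance isLocalization_away (f : R) [IsLocalization.Away f S] :
    IsLocalization.Away (⟨f, 0, I.zero_mem⟩ : Excision R I)
      (Excision S (I.map (algebraMap R S))) := by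
  refine IsLocalization.Away.mk _ ?_ (fun z => ?_) (fun a b hab => ?_)
  · refine isUnit_iff_exists_inv.2
      ⟨⟨IsLocalization.Away.invSelf f, 0, Ideal.zero_mem _⟩, ?_⟩
    rw [algebraMap_mk_zero, mk_zero_mul]
    exact ext' (IsLocalization.Away.mul_invSelf f) (mul_zero _)
  · obtain ⟨n, a, ha⟩ := IsLocalization.Away.surj f z.fst
    obtain ⟨⟨⟨i, hi⟩, ⟨-, m, rfl⟩⟩, hz⟩ :=
      (IsLocalization.mem_map_algebraMap_iff (Submonoid.powers f) S).1 z.mem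
    refine ⟨n + m, ⟨a * f ^ m, i * f ^ n, I.mul_mem_right _ hi⟩, ?_⟩
    rw [← map_pow, mk_zero_pow, algebraMap_mk_zero, mul_comm, mk_zero_mul]
    refine ext' ?_ ?_
    · change algebraMap R S (f ^ (n + m)) * z.fst = algebraMap R S (a * f ^ m)
      rw [map_mul, map_pow, map_pow, ← ha, pow_add]
      ring
    · change algebraMap R S (f ^ (n + m)) * z.snd = algebraMap R S (i * f ^ n)
      rw [map_mul, map_pow, map_pow, ← hz, map_pow, pow_add]
      ring
  · obtain ⟨n₁, h₁⟩ := IsLocalization.Away.exists_of_eq f (congrArg fst hab)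
    obtain ⟨n₂, h₂⟩ := IsLocalization.Away.exists_of_eq f (congrArg snd hab)
    refine ⟨n₁ + n₂, ?_⟩
    rw [mk_zero_pow, mk_zero_mul, mk_zero_mul]
    exact ext' (by linear_combination f ^ n₂ * h₁) (by linear_combination f ^ n₁ * h₂)

theorem mk'_mk_zero_pow (f : R) [IsLocalization.Away f S] (a : Excision R I) (n : ℕ) :
    IsLocalization.mk' (Excision S (I.map (algebraMap R S))) a
        (⟨(⟨f, 0, I.zero_mem⟩ : Excision R I) ^ n, n, rfl⟩ :
          Submonoid.powers (⟨f, 0, I.zero_mem⟩ : Excision R I)) =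
      ⟨IsLocalization.mk' S a.fst (⟨f ^ n, n, rfl⟩ : Submonoid.powers f),
        IsLocalization.mk' S a.snd (⟨f ^ n, n, rfl⟩ : Submonoid.powers f),
        IsLocalization.mk'_mem_iff.2 (Ideal.mem_map_of_mem _ a.mem)⟩ := by
  rw [IsLocalization.mk'_eq_iff_eq_mul]
  dsimp only
  rw [mk_zero_pow, algebraMap_mk_zero, mul_comm, mk_zero_mul]
  let fn : Submonoid.powers f := ⟨f ^ n, n, rfl⟩
  exact ext' (IsLocalization.mk'_spec' S a.fst fn).symm (IsLocalization.mk'_spec' S a.snd fn).symm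

end Paper.Excision

/-- Let `f ∈ R` be a non-zero-divisor and `I ⊆ R` an ideal.  Then
`(f,0)` is a non-zero-divisor in the excision algebra `R⊕I`, and the canonical map
`(R⊕I)_{(f,0)} → R_f ⊕ I_f`, `(r,i)/(f,0)ⁿ ↦ (r/fⁿ, i/fⁿ)`, is a ring isomorphism. -/
theorem statement7 (R : Type*) [CommRing R] (I : Ideal R) (f : R)
    (hf : f ∈ nonZeroDivisors R) :
    (⟨f, 0, I.zero_mem⟩ : Excision R I) ∈ nonZeroDivisors (Excision R I) ∧
    ∃ ψ : Localization.Away (⟨f, 0, I.zero_mem⟩ : Excision R I) ≃+*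
        Excision (Localization.Away f) (I.map (algebraMap R (Localization.Away f))),
      ∀ (r i : R) (hi : i ∈ I) (c : ℕ),
        ψ (Localization.mk ⟨r, i, hi⟩
            ⟨(⟨f, 0, I.zero_mem⟩ : Excision R I) ^ c, c, rfl⟩) =
          ⟨Localization.mk r ⟨f ^ c, c, rfl⟩, Localization.mk i ⟨f ^ c, c, rfl⟩,
            mk_mem_ideal_map I f i hi _⟩ := by
  refine ⟨Excision.mk_zero_mem_nonZeroDivisors hf,
    (Localization.algEquiv _ _).toRingEquiv, fun r i hi c => ?_⟩
  rw [AlgEquiv.coe_ringEquiv, Localization.algEquiv_mk, Excision.mk'_mk_zero_pow]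
  simp only [Localization.mk_eq_mk'_apply]
end

section
/- Let R be a commutative ring and n ∈ ℕ. (1) Linear case, n ≥ 2: if Um_n(R, ⟨a⟩) = e_1 · SL_n(R, ⟨a⟩) for every principal ideal ⟨a⟩ ⊂ R, then Um_n(R, I) = e_1 · SL_n(R, I) for every ideal I ⊂ R. (2) Symplectic case, n = 2m ≥ 4: if Um_{2m}(R, ⟨a⟩) = e_1 · Sp_{2m}(R, ⟨a⟩) for every principal ideal ⟨a⟩ ⊂ R, then Um_{2m}(R, I) = e_1 · Sp_{2m}(R, I) for every ideal I ⊂ R. -/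
open Matrix BigOperators

/-!
Write `v ∈ Um_n(R, I)` as `v = (1 + a) e₁ + v'` with `a ∈ I` and `v'` an `I`-vector whose first
entry is `0`. Some `g ∈ G(R, I)` moves `v` to `v - v₁ v' = (1 + a) e₁ - a v'`, which is congruent
to `e₁` modulo the principal ideal `⟨a⟩`; by hypothesis `v g = e₁ h` with
`h ∈ G(R, ⟨a⟩) ⊆ G(R, I)`, so `v = e₁ (h g⁻¹)`.

In the linear case `g` is the transvection `1 - e₁ᵀ v'`. In the symplectic case it is `1 + χ S`
with `S = e₂ᵀ(-v') + (-v')ᵀe₂ + v₂ e₂ᵀe₂`: since `S` is symmetric, `S χ S = 0` (the vectors `e₂`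
and `v'` are `χ`-orthogonal) and `χ² = -1`, this matrix is symplectic; the correction term
`v₂ e₂ᵀe₂` cancels the `e₂`-component `ω(v, v') = v₁ v₂` of `(v χ) S`.
-/

namespace Paper

variable {R : Type*} [CommRing R]

def unitOneAdd {A : Type*} [Ring A] {N : A} (hN : N * N = 0) : Aˣ where
  val := 1 + N
  inv := 1 - N
  val_inv := by rw [mul_sub, mul_one, add_mul, one_mul, hN]; abel
  inv_val := by rw [sub_mul, one_mul, mul_add, mul_one, hN]; abel

@[simp]
theorem val_unitOneAdd {A : Type*} [Ring A] {N : A} (hN : N * N = 0) :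
    (unitOneAdd hN : A) = 1 + N :=
  rfl

def congruenceSubgroup (n : ℕ) (R : Type*) [CommRing R] (I : Ideal R) :
    Subgroup (GL (Fin n) R) :=
  (mapGL (Ideal.Quotient.mk I)).ker

theorem mem_congruenceSubgroup_iff {n : ℕ} {I : Ideal R} {g : GL (Fin n) R} :
    g ∈ congruenceSubgroup n R I ↔
      (g : Matrix (Fin n) (Fin n) R).map (Ideal.Quotient.mk I) = 1 :=
  Units.ext_iff

theorem mem_congruenceSubgroup_iff_congOne {n : ℕ} {I : Ideal R} {g : GL (Fin n) R} :
    g ∈ congruenceSubgroup n R I ↔ congOne n R I g := by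
  rw [mem_congruenceSubgroup_iff, ← Matrix.map_one (Ideal.Quotient.mk I) (map_zero _) (map_one _),
    ← Matrix.ext_iff]
  simp only [Matrix.map_apply, Ideal.Quotient.eq, congOne]

theorem congruenceSubgroup_mono {n : ℕ} : Monotone (congruenceSubgroup n R) :=
  fun _ _ hIJ _ hg => mem_congruenceSubgroup_iff_congOne.2 fun i j =>
    hIJ (mem_congruenceSubgroup_iff_congOne.1 hg i j)

theorem unitOneAdd_mem_congruenceSubgroup {n : ℕ} {I : Ideal R}
    {N : Matrix (Fin n) (Fin n) R} (hN : N * N = 0) (hNI : ∀ i j, N i j ∈ I) :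
    unitOneAdd hN ∈ congruenceSubgroup n R I :=
  mem_congruenceSubgroup_iff_congOne.2 fun i j => by simpa using hNI i j

theorem exists_sum_mul_eq_one_vecMul {n : ℕ} {v : Fin n → R}
    (hv : ∃ b : Fin n → R, ∑ i, v i * b i = 1) (g : GL (Fin n) R) :
    ∃ b : Fin n → R, ∑ i, (v ᵥ* (g : Matrix (Fin n) (Fin n) R)) i * b i = 1 := by
  obtain ⟨b, hb⟩ := hv
  refine ⟨(g⁻¹ : GL (Fin n) R) *ᵥ b, ?_⟩
  change _ ⬝ᵥ _ = 1
  rw [dotProduct_mulVec, vecMul_vecMul, ← Units.val_mul, mul_inv_cancel, Units.val_one,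
    vecMul_one]
  exact hb

theorem vecMul_mem_Um {n : ℕ} {I : Ideal R} {v : Fin n → R} (hv : v ∈ Um n R I)
    {g : GL (Fin n) R} (hg : g ∈ congruenceSubgroup n R I) :
    v ᵥ* (g : Matrix (Fin n) (Fin n) R) ∈ Um n R I := by
  refine ⟨exists_sum_mul_eq_one_vecMul hv.1 g, fun i => ?_⟩
  have hv' : Ideal.Quotient.mk I ∘ v = Ideal.Quotient.mk I ∘ e1 n R :=
    funext fun j => Ideal.Quotient.eq.2 (hv.2 j)
  rw [← Ideal.Quotient.eq, RingHom.map_vecMul, mem_congruenceSubgroup_iff.1 hg, vecMul_one, hv']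
  rfl

theorem e1_succ (k : ℕ) : e1 (k + 1) R = Pi.single 0 1 := by
  ext i
  simp only [e1, Pi.single_apply, Fin.ext_iff, Fin.val_zero]

theorem e1_mem_Um (k : ℕ) (I : Ideal R) : e1 (k + 1) R ∈ Um (k + 1) R I :=
  ⟨⟨e1 (k + 1) R, by rw [e1_succ]; exact (single_dotProduct _ _ _).trans (by simp)⟩,
    fun i => by simp⟩

theorem sub_one_mem_of_mem_Um {k : ℕ} {I : Ideal R} {v : Fin (k + 1) → R}
    (hv : v ∈ Um (k + 1) R I) : v 0 - 1 ∈ I := by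
  simpa [e1_succ] using hv.2 0

theorem update_zero_mem_of_mem_Um {k : ℕ} {I : Ideal R} {v : Fin (k + 1) → R}
    (hv : v ∈ Um (k + 1) R I) (i : Fin (k + 1)) : Function.update v 0 0 i ∈ I := by
  by_cases hi : i = 0
  · simp [hi]
  · simpa [e1_succ, hi] using hv.2 i

theorem vecMul_mem_Um_span {k : ℕ} {I : Ideal R} {v : Fin (k + 1) → R} (hv : v ∈ Um (k + 1) R I)
    {g : GL (Fin (k + 1)) R}
    (hvg : v ᵥ* (g : Matrix (Fin (k + 1)) (Fin (k + 1)) R) = v - v 0 • Function.update v 0 0) :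
    v ᵥ* (g : Matrix (Fin (k + 1)) (Fin (k + 1)) R) ∈ Um (k + 1) R (Ideal.span {v 0 - 1}) := by
  refine ⟨exists_sum_mul_eq_one_vecMul hv.1 g, fun i => ?_⟩
  rw [hvg, e1_succ, Ideal.mem_span_singleton']
  by_cases hi : i = 0
  · exact ⟨1, by simp [hi]⟩
  · exact ⟨-v i, by simp [hi]; ring⟩

theorem Um_eq_firstRows_of_principal {k : ℕ} (G : Ideal R → Subgroup (GL (Fin (k + 1)) R))
    (hG : ∀ I, G I ≤ congruenceSubgroup (k + 1) R I) (hmono : Monotone G)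
    (hclear : ∀ I, ∀ v ∈ Um (k + 1) R I, ∃ g ∈ G I,
      v ᵥ* (g : Matrix (Fin (k + 1)) (Fin (k + 1)) R) = v - v 0 • Function.update v 0 0)
    (hprin : ∀ a : R, Um (k + 1) R (Ideal.span {a}) = firstRows (G (Ideal.span {a}) : Set _))
    (I : Ideal R) : Um (k + 1) R I = firstRows (G I : Set _) := by
  refine subset_antisymm (fun v hv => ?_) ?_
  · obtain ⟨g, hgG, hvg⟩ := hclear I v hv
    obtain ⟨h, hh, hvh⟩ := hprin (v 0 - 1) ▸ vecMul_mem_Um_span hv hvg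
    have haI : Ideal.span {v 0 - 1} ≤ I :=
      (Ideal.span_singleton_le_iff_mem I).2 (sub_one_mem_of_mem_Um hv)
    refine ⟨h * g⁻¹, mul_mem (hmono haI hh) (inv_mem hgG), ?_⟩
    rw [rowOne, Units.val_mul, ← vecMul_vecMul, ← rowOne, ← hvh, vecMul_vecMul, ← Units.val_mul,
      mul_inv_cancel, Units.val_one, vecMul_one]
  · rintro _ ⟨g, hg, rfl⟩
    exact vecMul_mem_Um (e1_mem_Um k I) (hG I hg)

section Linear

def specialCongruenceSubgroup (n : ℕ) (R : Type*) [CommRing R] (I : Ideal R) :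
    Subgroup (GL (Fin n) R) :=
  congruenceSubgroup n R I ⊓ GeneralLinearGroup.det.ker

theorem coe_specialCongruenceSubgroup (n : ℕ) (I : Ideal R) :
    (specialCongruenceSubgroup n R I : Set (GL (Fin n) R)) = SLrel n R I := by
  ext g
  simp [specialCongruenceSubgroup, SLrel, mem_congruenceSubgroup_iff_congOne, Units.ext_iff,
    and_comm]

theorem det_one_add_vecMulVec {ι : Type*} [Fintype ι] [DecidableEq ι] (x y : ι → R) :
    (1 + vecMulVec x y).det = 1 + y ⬝ᵥ x := by
  rw [vecMulVec_eq (Fin 1), det_one_add_replicateCol_mul_replicateRow]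

theorem exists_mem_specialCongruenceSubgroup_vecMul_eq {k : ℕ} {I : Ideal R}
    {v : Fin (k + 1) → R} (hv : v ∈ Um (k + 1) R I) :
    ∃ g ∈ specialCongruenceSubgroup (k + 1) R I,
      v ᵥ* (g : Matrix (Fin (k + 1)) (Fin (k + 1)) R) = v - v 0 • Function.update v 0 0 := by
  set e : Fin (k + 1) → R := Pi.single 0 1
  set w := -Function.update v 0 0
  have hw : w ⬝ᵥ e = 0 := by simp [w, e, dotProduct_single]
  have hN : vecMulVec e w * vecMulVec e w = 0 := by
    rw [vecMulVec_mul_vecMulVec, hw, zero_smul, vecMulVec_zero]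
  refine ⟨unitOneAdd hN,
    Subgroup.mem_inf.2 ⟨unitOneAdd_mem_congruenceSubgroup hN fun i j => ?_, ?_⟩, ?_⟩
  · exact Ideal.mul_mem_left _ _ (I.neg_mem (update_zero_mem_of_mem_Um hv j))
  · rw [MonoidHom.mem_ker, Units.ext_iff]
    exact (det_one_add_vecMulVec _ _).trans (by rw [hw, add_zero, Units.val_one])
  · rw [val_unitOneAdd, vecMul_add, vecMul_one, vecMul_vecMulVec, dotProduct_single, mul_one,
      smul_neg, ← sub_eq_add_neg]

end Linear

section Symplectic

def formPreservingSubgroup {ι : Type*} [Fintype ι] [DecidableEq ι] (φ : Matrix ι ι R) :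
    Subgroup (GL ι R) where
  carrier := { g | (g : Matrix ι ι R)ᵀ * φ * g = φ }
  one_mem' := by simp
  mul_mem' {g h} (hg : _ = φ) (hh : _ = φ) := show _ = φ by
    calc _ = (h : Matrix ι ι R)ᵀ * ((g : Matrix ι ι R)ᵀ * φ * g) * h := by
          simp only [Units.val_mul, transpose_mul, Matrix.mul_assoc]
      _ = φ := by rw [hg, hh]
  inv_mem' {g} (hg : _ = φ) := show _ = φ by
    calc _ = ((g⁻¹ : GL ι R) : Matrix ι ι R)ᵀ * ((g : Matrix ι ι R)ᵀ * φ * g) * (g⁻¹ : GL ι R) := by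
          rw [hg]
      _ = ((g * g⁻¹ : GL ι R) : Matrix ι ι R)ᵀ * φ * (g * g⁻¹ : GL ι R) := by
          simp only [Units.val_mul, transpose_mul, Matrix.mul_assoc]
      _ = φ := by rw [mul_inv_cancel, Units.val_one, transpose_one, Matrix.one_mul, Matrix.mul_one]

theorem transpose_mul_mul_one_add_mul {ι : Type*} [Fintype ι] [DecidableEq ι]
    {φ S : Matrix ι ι R} (hφ : φᵀ = -φ) (hφφ : φ * φ = -1) (hS : Sᵀ = S) (hSφS : S * φ * S = 0) :
    (1 + φ * S)ᵀ * φ * (1 + φ * S) = φ := by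
  rw [transpose_add, transpose_one, transpose_mul, hφ, hS]
  calc _ = φ + φ * φ * S - S * (φ * φ) - S * (φ * φ) * φ * S := by noncomm_ring
    _ = φ + S * φ * S := by rw [hφφ]; noncomm_ring
    _ = φ := by rw [hSφS, add_zero]

theorem dotProduct_mulVec_self_eq_zero {ι : Type*} [Fintype ι] {A : Matrix ι ι R}
    (hA : Aᵀ = -A) (hdiag : ∀ i, A i i = 0) (x : ι → R) : x ⬝ᵥ A *ᵥ x = 0 := by
  have hswap : ∀ i j, x i * A i j * x j = -(x j * A j i * x i) := fun i j => by
    rw [← transpose_apply A i j, hA, neg_apply]; ring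
  simp only [dotProduct, mulVec, Finset.mul_sum, ← Finset.sum_product', ← mul_assoc]
  refine Finset.sum_involution (fun p _ => p.swap) (fun p _ => by simp [hswap p.1 p.2])
    (fun p _ hp hswap' => hp ?_) (fun p _ => Finset.mem_univ _) (fun p _ => rfl)
  obtain ⟨i, j⟩ := p
  obtain rfl : j = i := (Prod.ext_iff.1 hswap').1
  rw [hdiag, mul_zero, zero_mul]

def symmetricOuter {ι : Type*} (x y : ι → R) (c : R) : Matrix ι ι R :=
  vecMulVec x y + vecMulVec y x + c • vecMulVec x x

theorem symmetricOuter_transpose {ι : Type*} (x y : ι → R) (c : R) :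
    (symmetricOuter x y c)ᵀ = symmetricOuter x y c := by
  simp only [symmetricOuter, transpose_add, transpose_smul, transpose_vecMulVec,
    add_comm (vecMulVec y x)]

theorem vecMul_symmetricOuter {ι : Type*} [Fintype ι] (z x y : ι → R) (c : R) :
    z ᵥ* symmetricOuter x y c = (z ⬝ᵥ x) • y + (z ⬝ᵥ y) • x + (c * (z ⬝ᵥ x)) • x := by
  simp only [symmetricOuter, vecMul_add, vecMul_smul, vecMul_vecMulVec, smul_smul]

theorem symmetricOuter_apply_mem {ι : Type*} {I : Ideal R} (x : ι → R) {y : ι → R} {c : R}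
    (hy : ∀ i, y i ∈ I) (hc : c ∈ I) (i j : ι) : symmetricOuter x y c i j ∈ I := by
  simp only [symmetricOuter, Matrix.add_apply, Matrix.smul_apply, vecMulVec_apply, smul_eq_mul]
  exact I.add_mem (I.add_mem (I.mul_mem_left _ (hy j)) (I.mul_mem_right _ (hy i)))
    (I.mul_mem_right _ hc)

theorem symmetricOuter_mul_mul_self {ι : Type*} [Fintype ι] {φ : Matrix ι ι R}
    (hφ : ∀ z, z ⬝ᵥ φ *ᵥ z = 0) {x y : ι → R} (hyx : y ⬝ᵥ φ *ᵥ x = 0) (c : R) :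
    symmetricOuter x y c * φ * symmetricOuter x y c = 0 := by
  have hxy : x ⬝ᵥ φ *ᵥ y = 0 := by
    have := hφ (x + y)
    simp only [mulVec_add, dotProduct_add, add_dotProduct, hφ, hyx] at this
    simpa using this
  simp only [symmetricOuter, add_mul, mul_add, Matrix.smul_mul, Matrix.mul_smul, vecMulVec_mul,
    vecMul_vecMulVec, ← dotProduct_mulVec, hφ, hxy, hyx, zero_smul, vecMulVec_zero,
    smul_zero, add_zero]

theorem sigmaPerm_val {n : ℕ} (hn : Even n) (i : Fin n) :
    (sigmaPerm n i : ℕ) = if i.val % 2 = 0 then i.val + 1 else i.val - 1 := by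
  have := i.isLt
  have := Nat.even_iff.1 hn
  unfold sigmaPerm
  rw [dif_pos (by split_ifs <;> omega)]

theorem sigmaPerm_sigmaPerm {n : ℕ} (hn : Even n) (i : Fin n) :
    sigmaPerm n (sigmaPerm n i) = i := by
  ext
  rw [sigmaPerm_val hn, sigmaPerm_val hn]
  split_ifs <;> omega

theorem chiMat_apply_eq_ite {n : ℕ} (hn : Even n) (i j : Fin n) :
    chiMat n R i j = if j = sigmaPerm n i then (if i.val % 2 = 0 then 1 else -1) else 0 := by
  simp only [chiMat, of_apply, Fin.ext_iff, sigmaPerm_val hn]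
  split_ifs <;> first | rfl | omega

theorem chiMat_mul_self {n : ℕ} (hn : Even n) : chiMat n R * chiMat n R = -1 := by
  ext i k
  have hσ : (sigmaPerm n i).val % 2 = 0 ↔ ¬ i.val % 2 = 0 := by
    rw [sigmaPerm_val hn]; split_ifs <;> omega
  simp only [mul_apply, chiMat_apply_eq_ite hn i, ite_mul, zero_mul, Finset.sum_ite_eq',
    Finset.mem_univ, if_true, chiMat_apply_eq_ite hn (sigmaPerm n i), sigmaPerm_sigmaPerm hn, hσ,
    Matrix.neg_apply, Matrix.one_apply, eq_comm (a := k)]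
  split_ifs <;> first | rfl | simp

theorem chiMat_transpose (n : ℕ) : (chiMat n R)ᵀ = -chiMat n R := by
  ext i j
  simp only [chiMat, transpose_apply, Matrix.neg_apply, of_apply]
  grind

theorem chiMat_apply_self {n : ℕ} (i : Fin n) : chiMat n R i i = 0 := by
  simp [chiMat]

theorem chiMat_mulVec_apply_zero {k : ℕ} (z : Fin (k + 2) → R) :
    (chiMat (k + 2) R *ᵥ z) 0 = z 1 := by
  have h1 (x : Fin (k + 2)) : (x : ℕ) = 1 ↔ x = 1 := by rw [Fin.ext_iff, Fin.val_one]
  simp [mulVec, dotProduct, chiMat, h1]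

theorem chiMat_mulVec_single_one (k : ℕ) :
    chiMat (k + 2) R *ᵥ Pi.single 1 1 = Pi.single 0 1 := by
  ext i
  rw [mulVec_single_one, col_apply, chiMat, of_apply, Fin.val_one]
  simp only [Pi.single_apply, Fin.ext_iff, Fin.val_zero]
  split_ifs <;> first | rfl | omega | simp_all

def symplecticCongruenceSubgroup (n : ℕ) (R : Type*) [CommRing R] (I : Ideal R) :
    Subgroup (GL (Fin n) R) :=
  congruenceSubgroup n R I ⊓ formPreservingSubgroup (chiMat n R)

theorem coe_symplecticCongruenceSubgroup (n : ℕ) (I : Ideal R) :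
    (symplecticCongruenceSubgroup n R I : Set (GL (Fin n) R)) = Sprel n R I := by
  ext g
  simp only [symplecticCongruenceSubgroup, SetLike.mem_coe, Subgroup.mem_inf,
    mem_congruenceSubgroup_iff_congOne, Sprel, SpSet, and_comm]
  rfl

theorem exists_mem_symplecticCongruenceSubgroup_vecMul_eq {k : ℕ} (hk : Even k) {I : Ideal R}
    {v : Fin (k + 2) → R} (hv : v ∈ Um (k + 2) R I) :
    ∃ g ∈ symplecticCongruenceSubgroup (k + 2) R I,
      v ᵥ* (g : Matrix (Fin (k + 2)) (Fin (k + 2)) R) = v - v 0 • Function.update v 0 0 := by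
  set χ := chiMat (k + 2) R
  set e : Fin (k + 2) → R := Pi.single 1 1
  set w := Function.update v 0 0
  set S := symmetricOuter e (-w) (v 1)
  have hχ : χᵀ = -χ := chiMat_transpose _
  have halt : ∀ z, z ⬝ᵥ χ *ᵥ z = 0 := dotProduct_mulVec_self_eq_zero hχ chiMat_apply_self
  have hωe (z : Fin (k + 2) → R) : z ⬝ᵥ χ *ᵥ e = z 0 := by
    rw [chiMat_mulVec_single_one, dotProduct_single, mul_one]
  have hwI : ∀ i, w i ∈ I := update_zero_mem_of_mem_Um hv
  have hw1 : w 1 = v 1 := Function.update_of_ne one_ne_zero _ _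
  have hωw : v ⬝ᵥ χ *ᵥ w = v 0 * v 1 := by
    have hvw : v = w + Pi.single 0 (v 0) := by
      ext i
      by_cases hi : i = 0 <;> simp [w, hi]
    conv_lhs => rw [hvw]
    rw [add_dotProduct, halt, single_dotProduct, chiMat_mulVec_apply_zero, hw1, zero_add]
  have hSχS : S * χ * S = 0 :=
    symmetricOuter_mul_mul_self halt (by rw [hωe]; simp [w]) _
  have hN : χ * S * (χ * S) = 0 := by
    rw [show χ * S * (χ * S) = χ * (S * χ * S) by simp only [Matrix.mul_assoc], hSχS,
      Matrix.mul_zero]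
  refine ⟨unitOneAdd hN, Subgroup.mem_inf.2 ⟨unitOneAdd_mem_congruenceSubgroup hN fun i j => ?_,
    transpose_mul_mul_one_add_mul hχ (chiMat_mul_self (by simpa [Nat.even_add] using hk))
      (symmetricOuter_transpose _ _ _) hSχS⟩, ?_⟩
  · have hSI := symmetricOuter_apply_mem e (fun i => I.neg_mem (hwI i)) (hw1 ▸ hwI 1)
    exact mul_apply (M := χ) ▸ Ideal.sum_mem _ fun l _ => I.mul_mem_left _ (hSI l j)
  · rw [val_unitOneAdd, vecMul_add, vecMul_one, ← vecMul_vecMul, vecMul_symmetricOuter,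
      ← dotProduct_mulVec, ← dotProduct_mulVec, hωe, mulVec_neg, dotProduct_neg, hωw, smul_neg,
      neg_smul, mul_comm (v 1)]
    abel

end Symplectic

end Paper

open Paper

/-- If relative unimodular rows are completable for all principal
ideals, then they are completable for all ideals — (1) linear case `n ≥ 2`,
(2) symplectic case `n = 2m ≥ 4`. -/
theorem statement9 (R : Type*) [CommRing R] :
    (∀ n : ℕ, 2 ≤ n →
      (∀ a : R, Um n R (Ideal.span {a}) = firstRows (SLrel n R (Ideal.span {a}))) →
      ∀ I : Ideal R, Um n R I = firstRows (SLrel n R I)) ∧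
    (∀ m : ℕ, 2 ≤ m →
      (∀ a : R, Um (2 * m) R (Ideal.span {a}) =
        firstRows (Sprel (2 * m) R (Ideal.span {a}))) →
      ∀ I : Ideal R, Um (2 * m) R I = firstRows (Sprel (2 * m) R I)) := by
  refine ⟨fun n hn hprin I => ?_, fun m hm hprin I => ?_⟩
  · obtain ⟨k, rfl⟩ : ∃ k, n = k + 1 := ⟨n - 1, by omega⟩
    simp only [← coe_specialCongruenceSubgroup] at hprin ⊢
    exact Um_eq_firstRows_of_principal _ (fun _ => inf_le_left)
      (congruenceSubgroup_mono.inf monotone_const)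
      (fun _ _ => exists_mem_specialCongruenceSubgroup_vecMul_eq) hprin I
  · obtain ⟨k, hk, hkm⟩ : ∃ k, Even k ∧ 2 * m = k + 2 := ⟨2 * (m - 1), even_two_mul _, by omega⟩
    rw [hkm] at hprin ⊢
    simp only [← coe_symplecticCongruenceSubgroup] at hprin ⊢
    exact Um_eq_firstRows_of_principal _ (fun _ => inf_le_left)
      (congruenceSubgroup_mono.inf monotone_const)
      (fun _ _ => exists_mem_symplecticCongruenceSubgroup_vecMul_eq hk) hprin I
end

section
/- Let R be an affine ℝ-algebra satisfying condition P (either R has no real maximal ideal, or the intersection of all real maximal ideals of R has height at least 1). Then the polynomial ring R[X] also satisfies condition P. -/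
open Matrix BigOperators

open Paper

/-! Real maximal ideals of `R[X]` contract to real maximal ideals of `R`, and, by going-down for
the flat extension `R → R[X]`, minimal primes contract to minimal primes. So if the intersection
of the real maximal ideals of `R[X]` lay in a minimal prime `q`, the intersection of those of `R`
would lie in the minimal prime `q ∩ R`. -/

theorem realMax_iff_exists_surjective_ker_eq {A : Type*} [CommRing A] {m : Ideal A} :
    realMax m ↔ ∃ φ : A →+* ℝ, Function.Surjective φ ∧ RingHom.ker φ = m := by
  constructor
  · rintro ⟨-, ⟨e⟩⟩
    refine ⟨(e : A ⧸ m →+* ℝ).comp (Ideal.Quotient.mk m),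
      e.surjective.comp Ideal.Quotient.mk_surjective, ?_⟩
    rw [RingHom.ker_comp_of_injective _ e.injective, Ideal.mk_ker]
  · rintro ⟨φ, hφ, rfl⟩
    exact ⟨RingHom.ker_isMaximal_of_surjective φ hφ,
      ⟨RingHom.quotientKerEquivOfSurjective hφ⟩⟩

/-- A ring homomorphism from an `ℝ`-algebra to `ℝ` is automatically onto, because the only
ring endomorphism of `ℝ` is the identity. -/
theorem realMax_comap {A B : Type*} [CommRing A] [CommRing B] [Algebra ℝ A] (f : A →+* B)
    {M : Ideal B} (hM : realMax M) : realMax (M.comap f) := by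
  obtain ⟨φ, -, rfl⟩ := realMax_iff_exists_surjective_ker_eq.mp hM
  refine realMax_iff_exists_surjective_ker_eq.mpr ⟨φ.comp f, fun a ↦ ⟨algebraMap ℝ A a, ?_⟩,
    RingHom.comap_ker φ f⟩
  exact RingHom.congr_fun (Subsingleton.elim ((φ.comp f).comp (algebraMap ℝ A)) (.id ℝ)) a

theorem sInf_realMax_le_comap {A B : Type*} [CommRing A] [CommRing B] [Algebra ℝ A]
    (f : A →+* B) :
    sInf { m : Ideal A | realMax m } ≤ (sInf { M : Ideal B | realMax M }).comap f := by
  intro x hx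
  exact Ideal.mem_sInf.mpr fun M hM ↦ Ideal.mem_sInf.mp hx (realMax_comap f hM)

theorem Ideal.comap_mem_minimalPrimes_of_hasGoingDown {R S : Type*} [CommRing R] [CommRing S]
    [Algebra R S] [Algebra.HasGoingDown R S] {Q : Ideal S} (hQ : Q ∈ minimalPrimes S) :
    Q.comap (algebraMap R S) ∈ minimalPrimes R := by
  have : Q.IsPrime := hQ.1.1
  refine ⟨⟨Ideal.IsPrime.comap _, bot_le⟩, fun p ⟨hp, _⟩ hpQ ↦ ?_⟩
  have : Q.LiesOver (Q.comap (algebraMap R S)) := ⟨rfl⟩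
  obtain ⟨P, hPQ, hP, hPp⟩ := Ideal.exists_ideal_le_liesOver_of_le (S := S) (p := p) Q hpQ
  rw [hPp.over]
  exact Ideal.comap_mono (hQ.2 ⟨hP, bot_le⟩ hPQ)

theorem statement11_general (R : Type*) [CommRing R] [Algebra ℝ R]
    (hP : conditionP R) :
    conditionP (Polynomial R) := by
  rcases hP with h | h
  · exact Or.inl fun M hM ↦ h _ (realMax_comap Polynomial.C hM)
  · exact Or.inr fun q hq hle ↦ h _ (Ideal.comap_mem_minimalPrimes_of_hasGoingDown hq)
      ((sInf_realMax_le_comap Polynomial.C).trans (Ideal.comap_mono hle))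

/-- If an affine `ℝ`-algebra `R` satisfies condition **P**, then so
does the polynomial ring `R[X]`. -/
theorem statement11 (R : Type*) [CommRing R] [Algebra ℝ R]
    (hfg : Algebra.FiniteType ℝ R) (hP : conditionP R) :
    conditionP (Polynomial R) :=
  statement11_general R hP
end

section
/- Let R be a commutative ring and I ⊂ R an ideal. Then the sequence K_1Sp(R,I) →^f K_1(R,I) →^H W'_E(R,I) is exact: the image of the forgetful map f equals the kernel of H, i.e. for [α] ∈ K_1(R,I) one has H([α]) = [χ_1] if and only if [α] lies in the image of f. -/
open Matrix BigOperators

open Paper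

/-!
Write `χ` for the standard symplectic form and `E(R,I)` for the relative elementary group.
If `αᵀχα ⊥ χ = εᵀχε` with `ε ∈ E(R,I)`, then after stabilizing `α` and permuting the even-sized
blocks (which fixes `χ`), `β = α ε⁻¹` is a relative symplectic matrix with `α = β ε`. The relative
Whitehead lemma, `diag(g, g⁻¹) ∈ E(R,I)` for `g ≡ 1 mod I`, shows that after one more
stabilization `diag(1, β ε β⁻¹) = diag(β⁻¹, β) diag(1, ε) diag(β⁻¹, β)⁻¹` is relatively
elementary, so `α` lies in `E(R,I) β` stably. Conversely, if stably `α = ε β` with `β`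
symplectic, then `diag(β⁻¹, α) = diag(1, ε) diag(β⁻¹, β)` is relatively elementary and carries
`χ ⊥ χ` to `χ ⊥ αᵀχα`.
-/

namespace Paper

section GeneralIndex

variable {ι κ : Type*} [Fintype ι] [DecidableEq ι] [Fintype κ] [DecidableEq κ]
  {R : Type*} [CommRing R]

variable (ι R) in
def elemGroup : Subgroup (GL ι R) :=
  Subgroup.closure
    { g | ∃ i j : ι, i ≠ j ∧ ∃ a : R, (g : Matrix ι ι R) = transvection i j a }

variable (ι) in
def relElemGroup (I : Ideal R) : Subgroup (GL ι R) :=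
  Subgroup.closure
    { g | ∃ ε ∈ elemGroup ι R, ∃ t : GL ι R,
        (∃ i j : ι, i ≠ j ∧ ∃ a ∈ I, (t : Matrix ι ι R) = transvection i j a) ∧
        g = ε * t * ε⁻¹ }

theorem Erel_eq_relElemGroup (n : ℕ) (I : Ideal R) : Erel n R I = relElemGroup (Fin n) I :=
  rfl

theorem mem_relElemGroup_of_coe_eq {I : Ideal R} {g : GL ι R} {i j : ι} (hij : i ≠ j)
    {a : R} (ha : a ∈ I) (hg : (g : Matrix ι ι R) = transvection i j a) :
    g ∈ relElemGroup ι I :=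
  Subgroup.subset_closure ⟨1, one_mem _, g, ⟨i, j, hij, a, ha, hg⟩, by group⟩

theorem relElemGroup_le_elemGroup (I : Ideal R) : relElemGroup ι I ≤ elemGroup ι R := by
  refine (Subgroup.closure_le _).2 ?_
  rintro g ⟨ε, hε, t, ⟨i, j, hij, a, -, hta⟩, rfl⟩
  exact mul_mem (mul_mem hε (Subgroup.subset_closure ⟨i, j, hij, a, hta⟩)) (inv_mem hε)

theorem conj_mem_relElemGroup {I : Ideal R} {e x : GL ι R} (he : e ∈ elemGroup ι R)
    (hx : x ∈ relElemGroup ι I) : e * x * e⁻¹ ∈ relElemGroup ι I := by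
  induction hx using Subgroup.closure_induction with
  | mem y hy =>
    obtain ⟨ε, hε, t, ht, rfl⟩ := hy
    exact Subgroup.subset_closure ⟨e * ε, mul_mem he hε, t, ht, by group⟩
  | one => simp
  | mul y z _ _ hy hz => simpa [mul_assoc] using mul_mem hy hz
  | inv y _ hy => simpa [mul_assoc] using inv_mem hy

def PreservesTransvections (φ : GL ι R →* GL κ R) : Prop :=
  ∀ g : GL ι R, ∀ i j, i ≠ j → ∀ a : R, (g : Matrix ι ι R) = transvection i j a →
    ∃ i' j', i' ≠ j' ∧ (φ g : Matrix κ κ R) = transvection i' j' a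

theorem PreservesTransvections.map_mem_elemGroup {φ : GL ι R →* GL κ R}
    (hφ : PreservesTransvections φ) {g : GL ι R} (hg : g ∈ elemGroup ι R) :
    φ g ∈ elemGroup κ R := by
  refine (Subgroup.closure_le ((elemGroup κ R).comap φ)).2 ?_ hg
  rintro g ⟨i, j, hij, a, hg⟩
  obtain ⟨i', j', hij', hφg⟩ := hφ g i j hij a hg
  exact Subgroup.subset_closure ⟨i', j', hij', a, hφg⟩

theorem PreservesTransvections.map_mem_relElemGroup {φ : GL ι R →* GL κ R}
    (hφ : PreservesTransvections φ) {I : Ideal R} {g : GL ι R}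
    (hg : g ∈ relElemGroup ι I) : φ g ∈ relElemGroup κ I := by
  refine (Subgroup.closure_le ((relElemGroup κ I).comap φ)).2 ?_ hg
  rintro g ⟨ε, hε, t, ⟨i, j, hij, a, ha, ht⟩, rfl⟩
  obtain ⟨i', j', hij', hφt⟩ := hφ t i j hij a ht
  show φ (ε * t * ε⁻¹) ∈ relElemGroup κ I
  rw [map_mul, map_mul, map_inv]
  exact conj_mem_relElemGroup (hφ.map_mem_elemGroup hε) (mem_relElemGroup_of_coe_eq hij' ha hφt)

def reindexGL (e : ι ≃ κ) : GL ι R →* GL κ R :=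
  Units.map (reindexAlgEquiv R R e).toMonoidHom

@[simp] theorem coe_reindexGL (e : ι ≃ κ) (g : GL ι R) :
    (reindexGL e g : Matrix κ κ R) = reindex e e g := rfl

theorem preservesTransvections_reindexGL (e : ι ≃ κ) :
    PreservesTransvections (reindexGL (R := R) e) := fun g i j hij a hg =>
  ⟨e i, e j, e.injective.ne hij, by
    rw [coe_reindexGL, hg]
    exact (TransvectionStruct.toMatrix_reindexEquiv e ⟨i, j, hij, a⟩).symm⟩

def blockDiagGL : GL ι R × GL κ R →* GL (ι ⊕ κ) R where
  toFun p := ⟨fromBlocks p.1 0 0 p.2, fromBlocks ↑p.1⁻¹ 0 0 ↑p.2⁻¹,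
    by simp [fromBlocks_multiply], by simp [fromBlocks_multiply]⟩
  map_one' := Units.ext fromBlocks_one
  map_mul' p q := Units.ext (by simp [fromBlocks_multiply])

@[simp] theorem coe_blockDiagGL (p : GL ι R × GL κ R) :
    (blockDiagGL p : Matrix (ι ⊕ κ) (ι ⊕ κ) R) = fromBlocks p.1 0 0 p.2 := rfl

theorem preservesTransvections_blockDiagGL_inl :
    PreservesTransvections ((blockDiagGL (ι := ι) (κ := κ) (R := R)).comp (.inl _ _)) :=
  fun g i j hij a hg => ⟨.inl i, .inl j, by simpa using hij, by
    simp only [MonoidHom.comp_apply, MonoidHom.inl_apply, coe_blockDiagGL, hg, Units.val_one]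
    exact (TransvectionStruct.toMatrix_sumInl κ ⟨i, j, hij, a⟩).symm⟩

theorem preservesTransvections_blockDiagGL_inr :
    PreservesTransvections ((blockDiagGL (ι := ι) (κ := κ) (R := R)).comp (.inr _ _)) :=
  fun g i j hij a hg => ⟨.inr i, .inr j, by simpa using hij, by
    ext (k | k) (l | l) <;> simp [hg, transvection, one_apply, single_apply]⟩

theorem blockDiagGL_mem_relElemGroup {I : Ideal R} {g : GL ι R} {h : GL κ R}
    (hg : g ∈ relElemGroup ι I) (hh : h ∈ relElemGroup κ I) :
    blockDiagGL (g, h) ∈ relElemGroup (ι ⊕ κ) I := by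
  rw [← one_mul h, ← mul_one g, ← Prod.mk_mul_mk, map_mul]
  exact mul_mem (preservesTransvections_blockDiagGL_inl.map_mem_relElemGroup hg)
    (preservesTransvections_blockDiagGL_inr.map_mem_relElemGroup hh)

variable (ι) in
def congrSubgroup (I : Ideal R) : Subgroup (GL ι R) :=
  (GeneralLinearGroup.map (Ideal.Quotient.mk I)).ker

theorem mem_congrSubgroup_iff {I : Ideal R} {g : GL ι R} :
    g ∈ congrSubgroup ι I ↔ ∀ i j, (g : Matrix ι ι R) i j - (1 : Matrix ι ι R) i j ∈ I := by
  simp only [congrSubgroup, MonoidHom.mem_ker, Units.ext_iff, GeneralLinearGroup.map,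
    Units.coe_map, Units.val_one, ← Matrix.ext_iff, ← Ideal.Quotient.mk_eq_mk_iff_sub_mem]
  simp [one_apply, apply_ite]

theorem relElemGroup_le_congrSubgroup (I : Ideal R) :
    relElemGroup ι I ≤ congrSubgroup ι I := by
  refine (Subgroup.closure_le _).2 ?_
  rintro g ⟨ε, -, t, ⟨i, j, -, a, ha, ht⟩, rfl⟩
  have : t ∈ congrSubgroup ι I := mem_congrSubgroup_iff.2 fun k l => by
    by_cases hk : i = k <;> by_cases hl : j = l <;> simp [ht, transvection, hk, hl, ha]
  exact (MonoidHom.normal_ker _).conj_mem t this ε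

theorem blockDiagGL_mem_congrSubgroup {I : Ideal R} {g : GL ι R} {h : GL κ R}
    (hg : g ∈ congrSubgroup ι I) (hh : h ∈ congrSubgroup κ I) :
    blockDiagGL (g, h) ∈ congrSubgroup (ι ⊕ κ) I := by
  rw [mem_congrSubgroup_iff] at *
  rintro (i | i) (j | j)
  · simpa [one_apply] using hg i j
  · simp
  · simp
  · simpa [one_apply] using hh i j

theorem reindexGL_mem_congrSubgroup {I : Ideal R} (e : ι ≃ κ) {g : GL ι R}
    (hg : g ∈ congrSubgroup ι I) : reindexGL e g ∈ congrSubgroup κ I := by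
  rw [mem_congrSubgroup_iff] at *
  intro i j
  simpa [one_apply] using hg (e.symm i) (e.symm j)

end GeneralIndex

section Whitehead

variable {ι : Type*} [Fintype ι] [DecidableEq ι] {R : Type*} [CommRing R]

def upperGL (M : Matrix ι ι R) : GL (ι ⊕ ι) R :=
  ⟨fromBlocks 1 M 0 1, fromBlocks 1 (-M) 0 1,
    by simp [fromBlocks_multiply, ← fromBlocks_one],
    by simp [fromBlocks_multiply, ← fromBlocks_one]⟩

@[simp] theorem coe_upperGL (M : Matrix ι ι R) :
    (upperGL M : Matrix (ι ⊕ ι) (ι ⊕ ι) R) = fromBlocks 1 M 0 1 := rfl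

theorem upperGL_add (M N : Matrix ι ι R) : upperGL (M + N) = upperGL M * upperGL N :=
  Units.ext (by simp [fromBlocks_multiply, add_comm])

theorem upperGL_zero : upperGL (0 : Matrix ι ι R) = 1 :=
  Units.ext fromBlocks_one

theorem upperGL_mem_relElemGroup {I : Ideal R} {M : Matrix ι ι R} (hM : ∀ i j, M i j ∈ I) :
    upperGL M ∈ relElemGroup (ι ⊕ ι) I := by
  have hadd : ∀ A B : Matrix ι ι R, upperGL A ∈ relElemGroup (ι ⊕ ι) I →
      upperGL B ∈ relElemGroup (ι ⊕ ι) I → upperGL (A + B) ∈ relElemGroup (ι ⊕ ι) I :=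
    fun A B hA hB => by rw [upperGL_add]; exact mul_mem hA hB
  have hzero : upperGL (0 : Matrix ι ι R) ∈ relElemGroup (ι ⊕ ι) I := by
    rw [upperGL_zero]; exact one_mem _
  rw [M.matrix_eq_sum_single]
  refine Finset.sum_induction _ _ hadd hzero fun i _ => ?_
  refine Finset.sum_induction _ _ hadd hzero fun j _ => ?_
  refine mem_relElemGroup_of_coe_eq (g := upperGL (single i j (M i j)))
    (Sum.inl_ne_inr : (Sum.inl i : ι ⊕ ι) ≠ Sum.inr j) (hM i j) ?_
  ext (k | k) (l | l) <;> simp [transvection, one_apply, single_apply]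

def lowerGL (M : Matrix ι ι R) : GL (ι ⊕ ι) R :=
  reindexGL (Equiv.sumComm ι ι) (upperGL M)

@[simp] theorem coe_lowerGL (M : Matrix ι ι R) :
    (lowerGL M : Matrix (ι ⊕ ι) (ι ⊕ ι) R) = fromBlocks 1 0 M 1 := by
  simp [lowerGL, reindex_apply]

theorem lowerGL_add (M N : Matrix ι ι R) : lowerGL (M + N) = lowerGL M * lowerGL N := by
  rw [lowerGL, upperGL_add, map_mul]; rfl

theorem lowerGL_mem_relElemGroup {I : Ideal R} {M : Matrix ι ι R} (hM : ∀ i j, M i j ∈ I) :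
    lowerGL M ∈ relElemGroup (ι ⊕ ι) I :=
  (preservesTransvections_reindexGL _).map_mem_relElemGroup (upperGL_mem_relElemGroup hM)

theorem upperGL_mem_elemGroup (M : Matrix ι ι R) : upperGL M ∈ elemGroup (ι ⊕ ι) R :=
  relElemGroup_le_elemGroup ⊤ (upperGL_mem_relElemGroup fun _ _ => Submodule.mem_top)

theorem lowerGL_mem_elemGroup (M : Matrix ι ι R) : lowerGL M ∈ elemGroup (ι ⊕ ι) R :=
  relElemGroup_le_elemGroup ⊤ (lowerGL_mem_relElemGroup fun _ _ => Submodule.mem_top)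

theorem blockDiagGL_mk_inv_mul_eq (g : GL ι R) :
    blockDiagGL (g, g⁻¹) * (upperGL 1 * lowerGL (-1) * upperGL 1) =
      upperGL g * lowerGL (-↑g⁻¹) * upperGL g := by
  ext1
  simp [fromBlocks_multiply]

theorem blockDiagGL_mk_inv_mem_relElemGroup {I : Ideal R} {g : GL ι R}
    (hg : g ∈ congrSubgroup ι I) : blockDiagGL (g, g⁻¹) ∈ relElemGroup (ι ⊕ ι) I := by
  set A : Matrix ι ι R := (g : Matrix ι ι R)
  set B : Matrix ι ι R := ↑g⁻¹
  have hA : ∀ i j, (A - 1) i j ∈ I := mem_congrSubgroup_iff.1 hg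
  have hB : ∀ i j, (1 - B) i j ∈ I := fun i j => by
    rw [Matrix.sub_apply, ← neg_sub]; exact I.neg_mem (mem_congrSubgroup_iff.1 (inv_mem hg) i j)
  -- Only the factors `U(A - 1)` and `L(1 - B)` are relative; the absolute elementary factors
  -- `U(1)`, `L(-1)` occur only as conjugators.
  have hU : upperGL A = upperGL (A - 1) * upperGL 1 := by rw [← upperGL_add, sub_add_cancel]
  have hL : lowerGL (-B) = lowerGL (1 - B) * lowerGL (-1) := by
    rw [← lowerGL_add]; congr 1; abel
  have regroup : ∀ x y u l : GL (ι ⊕ ι) R,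
      x * u * (y * l) * (x * u) * (u * l * u)⁻¹ = x * (u * y * u⁻¹) * (u * l * x * (u * l)⁻¹) :=
    fun _ _ _ _ => by group
  rw [eq_mul_inv_of_mul_eq (blockDiagGL_mk_inv_mul_eq g), hU, hL, regroup]
  exact mul_mem (mul_mem (upperGL_mem_relElemGroup hA)
      (conj_mem_relElemGroup (upperGL_mem_elemGroup 1) (lowerGL_mem_relElemGroup hB)))
    (conj_mem_relElemGroup (mul_mem (upperGL_mem_elemGroup 1) (lowerGL_mem_elemGroup (-1)))
      (upperGL_mem_relElemGroup hA))

end Whitehead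

section FormStabilizer

variable {ι : Type*} [Fintype ι] [DecidableEq ι] {R : Type*} [CommRing R]

def formStabilizer (χ : Matrix ι ι R) : Subgroup (GL ι R) where
  carrier := { g | (g : Matrix ι ι R)ᵀ * χ * (g : Matrix ι ι R) = χ }
  one_mem' := by simp
  mul_mem' {g h} (hg : (g : Matrix ι ι R)ᵀ * χ * (g : Matrix ι ι R) = χ)
      (hh : (h : Matrix ι ι R)ᵀ * χ * (h : Matrix ι ι R) = χ) := by
    change ((g * h : GL ι R) : Matrix ι ι R)ᵀ * χ * ((g * h : GL ι R) : Matrix ι ι R) = χ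
    calc _ = (h : Matrix ι ι R)ᵀ * ((g : Matrix ι ι R)ᵀ * χ * (g : Matrix ι ι R)) * h := by
          simp only [Units.val_mul, transpose_mul, Matrix.mul_assoc]
      _ = χ := by rw [hg, hh]
  inv_mem' {g} (hg : (g : Matrix ι ι R)ᵀ * χ * (g : Matrix ι ι R) = χ) := by
    change ((g⁻¹ : GL ι R) : Matrix ι ι R)ᵀ * χ * ((g⁻¹ : GL ι R) : Matrix ι ι R) = χ
    conv_lhs => rw [← hg]
    simp only [← Matrix.mul_assoc, ← transpose_mul]
    simp [Matrix.mul_assoc]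

theorem mem_formStabilizer {χ : Matrix ι ι R} {g : GL ι R} :
    g ∈ formStabilizer χ ↔ (g : Matrix ι ι R)ᵀ * χ * (g : Matrix ι ι R) = χ := Iff.rfl

def ElemCongr (I : Ideal R) (X Y : Matrix ι ι R) : Prop :=
  ∃ ε ∈ relElemGroup ι I, X = (ε : Matrix ι ι R)ᵀ * Y * ε

theorem ElemCongr.reindex {κ : Type*} [Fintype κ] [DecidableEq κ] {I : Ideal R}
    {X Y : Matrix ι ι R} (e : ι ≃ κ) (h : ElemCongr I X Y) :
    ElemCongr I (reindex e e X) (reindex e e Y) := by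
  obtain ⟨ε, hε, rfl⟩ := h
  refine ⟨reindexGL e ε, (preservesTransvections_reindexGL e).map_mem_relElemGroup hε, ?_⟩
  simp [reindex_apply, transpose_submatrix, submatrix_mul_equiv]

theorem exists_mem_formStabilizer_of_elemCongr {I : Ideal R} {χ : Matrix ι ι R}
    {a : GL ι R} (ha : a ∈ congrSubgroup ι I)
    (h : ElemCongr I ((a : Matrix ι ι R)ᵀ * χ * (a : Matrix ι ι R)) χ) :
    ∃ β ∈ congrSubgroup ι I, β ∈ formStabilizer χ ∧
      ∃ η ∈ relElemGroup (ι ⊕ ι) I, blockDiagGL (1, a) = η * blockDiagGL (1, β) := by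
  obtain ⟨e, he, hae⟩ := h
  set β := a * e⁻¹
  have hβ : β ∈ congrSubgroup ι I := mul_mem ha (inv_mem (relElemGroup_le_congrSubgroup I he))
  refine ⟨β, hβ, ?_, blockDiagGL ((β⁻¹, β) * (1, e) * (β⁻¹, β)⁻¹), ?_, ?_⟩
  · calc ((β : GL ι R) : Matrix ι ι R)ᵀ * χ * (β : Matrix ι ι R)
        = (↑e⁻¹ : Matrix ι ι R)ᵀ * ((a : Matrix ι ι R)ᵀ * χ * (a : Matrix ι ι R)) * ↑e⁻¹ := by
          simp only [β, Units.val_mul, transpose_mul, Matrix.mul_assoc]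
      _ = ((e : Matrix ι ι R) * ↑e⁻¹)ᵀ * χ * ((e : Matrix ι ι R) * ↑e⁻¹) := by
          rw [hae]; simp only [transpose_mul, Matrix.mul_assoc]
      _ = χ := by simp
  · have hD : blockDiagGL (β⁻¹, β) ∈ relElemGroup (ι ⊕ ι) I := by
      simpa using blockDiagGL_mk_inv_mem_relElemGroup (inv_mem hβ)
    rw [map_mul, map_mul, map_inv]
    exact mul_mem (mul_mem hD (blockDiagGL_mem_relElemGroup (one_mem _) he)) (inv_mem hD)
  · rw [← map_mul]
    congr 1
    ext1 <;> simp only [Prod.fst_mul, Prod.snd_mul, Prod.fst_inv, Prod.snd_inv, β] <;> group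

theorem elemCongr_fromBlocks_of_eq_mul {I : Ideal R} {χ : Matrix ι ι R} {a b ε : GL ι R}
    (hb : b ∈ congrSubgroup ι I) (hbχ : b ∈ formStabilizer χ) (hε : ε ∈ relElemGroup ι I)
    (hab : a = ε * b) :
    ElemCongr I (fromBlocks χ 0 0 ((a : Matrix ι ι R)ᵀ * χ * (a : Matrix ι ι R)))
      (fromBlocks χ 0 0 χ) := by
  refine ⟨blockDiagGL (b⁻¹, a), ?_, ?_⟩
  · rw [hab, show (b⁻¹, ε * b) = (1, ε) * (b⁻¹, b⁻¹⁻¹) by simp, map_mul]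
    exact mul_mem (blockDiagGL_mem_relElemGroup (one_mem _) hε)
      (blockDiagGL_mk_inv_mem_relElemGroup (inv_mem hb))
  · have hb' := mem_formStabilizer.1 (inv_mem hbχ)
    simp only [Matrix.coe_units_inv] at hb'
    simp [fromBlocks_transpose, fromBlocks_multiply, hb']

end FormStabilizer

def blockEquiv {a b N : ℕ} (h : a + b = N) : Fin a ⊕ Fin b ≃ Fin N :=
  finSumFinEquiv.trans (finCongr h)

@[simp] theorem val_blockEquiv_inl {a b N : ℕ} (h : a + b = N) (i : Fin a) :
    (blockEquiv h (.inl i) : ℕ) = i := rfl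

@[simp] theorem val_blockEquiv_inr {a b N : ℕ} (h : a + b = N) (i : Fin b) :
    (blockEquiv h (.inr i) : ℕ) = a + i := rfl

theorem reindex_blockEquiv_eq_iff {α : Type*} {a b N : ℕ} (h : a + b = N)
    (M : Matrix (Fin a ⊕ Fin b) (Fin a ⊕ Fin b) α) (X : Matrix (Fin N) (Fin N) α) :
    reindex (blockEquiv h) (blockEquiv h) M = X ↔
      ∀ i j, M i j = X (blockEquiv h i) (blockEquiv h j) := by
  rw [← Equiv.eq_symm_apply, ← Matrix.ext_iff]
  simp [reindex_apply]

section FinBlocks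

variable {R : Type*} [CommRing R]

theorem reindex_fromBlocks_chiMat {a b N : ℕ} (h : a + b = N) (ha : a % 2 = 0) :
    reindex (blockEquiv h) (blockEquiv h) (fromBlocks (chiMat a R) 0 0 (chiMat b R)) =
      chiMat N R := by
  rw [reindex_blockEquiv_eq_iff]
  rintro (i | i) (j | j) <;> have := i.isLt <;> have := j.isLt <;>
    simp only [chiMat, of_apply, fromBlocks_apply₁₁, fromBlocks_apply₁₂, fromBlocks_apply₂₁,
      fromBlocks_apply₂₂, Matrix.zero_apply, val_blockEquiv_inl, val_blockEquiv_inr] <;>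
    grind

theorem reindex_finCongr_osum {a b N : ℕ} (h : a + b = N) (A : Matrix (Fin a) (Fin a) R)
    (B : Matrix (Fin b) (Fin b) R) :
    reindex (finCongr h) (finCongr h) (osum A B) =
      reindex (blockEquiv h) (blockEquiv h) (fromBlocks A 0 0 B) := by
  subst h
  rw [eq_comm, reindex_blockEquiv_eq_iff]
  rintro (i | i) (j | j) <;> simp [osum]

theorem stabTo_eq_reindex {k n N : ℕ} (h : k + n = N) (A : Matrix (Fin n) (Fin n) R) :
    stabTo N A = reindex (blockEquiv h) (blockEquiv h) (fromBlocks 1 0 0 A) := by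
  subst h
  rw [eq_comm, reindex_blockEquiv_eq_iff]
  rintro (i | i) (j | j) <;> simp [stabTo, one_apply, Fin.ext_iff] <;> grind

theorem stabTo_stabTo {n N P : ℕ} (hnN : n ≤ N) (hNP : N ≤ P) (A : Matrix (Fin n) (Fin n) R) :
    stabTo P (stabTo N A) = stabTo P A := by
  ext i j
  simp only [stabTo, of_apply]
  split_ifs <;> grind

theorem stabTo_mul {n N : ℕ} (hnN : n ≤ N) (A B : Matrix (Fin n) (Fin n) R) :
    stabTo N (A * B) = stabTo N A * stabTo N B := by
  have hk : N - n + n = N := by omega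
  simp [stabTo_eq_reindex hk, reindex_apply, submatrix_mul_equiv, fromBlocks_multiply]

theorem stabTo_transpose_mul_chiMat_mul {k n N : ℕ} (h : k + n = N) (hk : k % 2 = 0)
    (A : Matrix (Fin n) (Fin n) R) :
    (stabTo N A)ᵀ * chiMat N R * stabTo N A =
      reindex (blockEquiv h) (blockEquiv h)
        (fromBlocks (chiMat k R) 0 0 (Aᵀ * chiMat n R * A)) := by
  rw [stabTo_eq_reindex h, ← reindex_fromBlocks_chiMat h hk]
  simp [reindex_apply, transpose_submatrix, submatrix_mul_equiv, fromBlocks_transpose,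
    fromBlocks_multiply]

def stabGL {k n N : ℕ} (h : k + n = N) : GL (Fin n) R →* GL (Fin N) R :=
  (reindexGL (blockEquiv h)).comp (blockDiagGL.comp (.inr _ _))

@[simp] theorem coe_stabGL {k n N : ℕ} (h : k + n = N) (g : GL (Fin n) R) :
    (stabGL h g : Matrix (Fin N) (Fin N) R) = stabTo N (g : Matrix (Fin n) (Fin n) R) := by
  simp [stabGL, stabTo_eq_reindex h]

theorem stabGL_mem_relElemGroup {k n N : ℕ} (h : k + n = N) {I : Ideal R} {g : GL (Fin n) R}
    (hg : g ∈ relElemGroup (Fin n) I) : stabGL h g ∈ relElemGroup (Fin N) I :=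
  (preservesTransvections_reindexGL _).map_mem_relElemGroup
    (preservesTransvections_blockDiagGL_inr.map_mem_relElemGroup hg)

theorem stabGL_mem_congrSubgroup {k n N : ℕ} (h : k + n = N) {I : Ideal R} {g : GL (Fin n) R}
    (hg : g ∈ congrSubgroup (Fin n) I) : stabGL h g ∈ congrSubgroup (Fin N) I :=
  reindexGL_mem_congrSubgroup _ (blockDiagGL_mem_congrSubgroup (one_mem _) hg)

theorem stabGL_mem_formStabilizer {k n N : ℕ} (h : k + n = N) (hk : k % 2 = 0)
    {g : GL (Fin n) R} (hg : g ∈ formStabilizer (chiMat n R)) :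
    stabGL h g ∈ formStabilizer (chiMat N R) := by
  rw [mem_formStabilizer, coe_stabGL, stabTo_transpose_mul_chiMat_mul h hk,
    mem_formStabilizer.1 hg, reindex_fromBlocks_chiMat h hk]

theorem mem_Sprel_iff {m : ℕ} {I : Ideal R} {g : GL (Fin m) R} :
    g ∈ Sprel m R I ↔ g ∈ congrSubgroup (Fin m) I ∧ g ∈ formStabilizer (chiMat m R) :=
  ⟨fun ⟨hχ, hI⟩ => ⟨mem_congrSubgroup_iff.2 hI, hχ⟩,
    fun ⟨hI, hχ⟩ => ⟨hχ, mem_congrSubgroup_iff.1 hI⟩⟩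

theorem ElemCongr.reindex_fromBlocks_comm {a b N : ℕ} (h : a + b = N) (h' : b + a = N)
    (ha : a % 2 = 0) (hb : b % 2 = 0) {I : Ideal R} {X : Matrix (Fin a) (Fin a) R}
    {Y : Matrix (Fin b) (Fin b) R}
    (hXY : ElemCongr I (Matrix.reindex (blockEquiv h) (blockEquiv h) (fromBlocks X 0 0 Y))
      (chiMat N R)) :
    ElemCongr I (Matrix.reindex (blockEquiv h') (blockEquiv h') (fromBlocks Y 0 0 X))
      (chiMat N R) := by
  have swap : ∀ {c d : ℕ} (h₁ : c + d = N) (h₂ : d + c = N) (Z : Matrix (Fin c) (Fin c) R)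
      (W : Matrix (Fin d) (Fin d) R),
      Matrix.reindex ((blockEquiv h₁).symm.trans ((Equiv.sumComm _ _).trans (blockEquiv h₂)))
        ((blockEquiv h₁).symm.trans ((Equiv.sumComm _ _).trans (blockEquiv h₂)))
        (Matrix.reindex (blockEquiv h₁) (blockEquiv h₁) (fromBlocks Z 0 0 W)) =
      Matrix.reindex (blockEquiv h₂) (blockEquiv h₂) (fromBlocks W 0 0 Z) := by
    intro c d h₁ h₂ Z W
    rw [← fromBlocks_submatrix_sum_swap_sum_swap]
    simp only [reindex_apply, submatrix_submatrix]
    congr 1 <;> funext x <;> simp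
  have := hXY.reindex ((blockEquiv h).symm.trans ((Equiv.sumComm _ _).trans (blockEquiv h')))
  -- the block swap fixes `χ` because both blocks have even size
  rwa [swap, ← reindex_fromBlocks_chiMat h ha, swap, reindex_fromBlocks_chiMat h' hb] at this

theorem altRel_chiE_one_iff {I : Ideal R} {n : ℕ} (A : Matrix (Fin (2 * n)) (Fin (2 * n)) R) :
    altRel I ⟨n, Aᵀ * chiMat (2 * n) R * A⟩ (chiE R 1) ↔
      ∃ t : ℕ, ElemCongr I
        ((stabTo (2 * (n + 1 + t)) A)ᵀ * chiMat (2 * (n + 1 + t)) R * stabTo (2 * (n + 1 + t)) A)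
        (chiMat (2 * (n + 1 + t)) R) := by
  refine exists_congr fun t => ?_
  have h₁ : 2 * n + 2 * (1 + t) = 2 * (n + 1 + t) := by ring
  have h₂ : 2 * 1 + 2 * (n + t) = 2 * (n + 1 + t) := by ring
  have h₃ : 2 * (1 + t) + 2 * n = 2 * (n + 1 + t) := by ring
  change ElemCongr I
    (reindex (finCongr h₁) (finCongr h₁)
      (osum (Aᵀ * chiMat (2 * n) R * A) (chiMat (2 * (1 + t)) R)))
    (reindex (finCongr h₂) (finCongr h₂) (osum (chiMat (2 * 1) R) (chiMat (2 * (n + t)) R))) ↔ _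
  rw [reindex_finCongr_osum, reindex_finCongr_osum, reindex_fromBlocks_chiMat h₂ (by omega),
    stabTo_transpose_mul_chiMat_mul h₃ (by omega)]
  exact ⟨ElemCongr.reindex_fromBlocks_comm h₁ h₃ (by omega) (by omega),
    ElemCongr.reindex_fromBlocks_comm h₃ h₁ (by omega) (by omega)⟩

theorem exists_stabTo_eq_mul_of_elemCongr {I : Ideal R} {n m : ℕ} (hnm : n ≤ m)
    {α : GL (Fin (2 * n)) R} (hα : α ∈ congrSubgroup (Fin (2 * n)) I)
    (h : ElemCongr I ((stabTo (2 * m) (α : Matrix (Fin (2 * n)) (Fin (2 * n)) R))ᵀ *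
      chiMat (2 * m) R * stabTo (2 * m) (α : Matrix (Fin (2 * n)) (Fin (2 * n)) R))
      (chiMat (2 * m) R)) :
    ∃ β : GL (Fin (2 * m)) R, β ∈ congrSubgroup _ I ∧ β ∈ formStabilizer (chiMat (2 * m) R) ∧
      ∃ ε ∈ relElemGroup (Fin (2 * m + 2 * m)) I,
        stabTo (2 * m + 2 * m) (α : Matrix (Fin (2 * n)) (Fin (2 * n)) R) =
          (ε : Matrix _ _ R) *
            stabTo (2 * m + 2 * m) (β : Matrix (Fin (2 * m)) (Fin (2 * m)) R) := by
  have hM : (2 * m - 2 * n) + 2 * n = 2 * m := by omega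
  rw [← coe_stabGL hM] at h
  obtain ⟨β, hβI, hβχ, η, hη, hαβ⟩ :=
    exists_mem_formStabilizer_of_elemCongr (stabGL_mem_congrSubgroup hM hα) h
  refine ⟨β, hβI, hβχ, reindexGL (blockEquiv rfl) η,
    (preservesTransvections_reindexGL _).map_mem_relElemGroup hη, ?_⟩
  rw [← stabTo_stabTo (N := 2 * m) (by omega) (by omega), ← coe_stabGL hM, ← coe_stabGL rfl,
    ← coe_stabGL rfl, ← Units.val_mul]
  exact congrArg _ ((congrArg (reindexGL (blockEquiv rfl)) hαβ).trans (map_mul _ _ _))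

theorem exists_elemCongr_of_stabTo_eq_mul {I : Ideal R} {n m N : ℕ} (hnN : 2 * n ≤ N)
    (hmN : 2 * m ≤ N) {α : GL (Fin (2 * n)) R} {β : GL (Fin (2 * m)) R} {ε : GL (Fin N) R}
    (hβI : β ∈ congrSubgroup _ I) (hβχ : β ∈ formStabilizer (chiMat (2 * m) R))
    (hε : ε ∈ relElemGroup (Fin N) I)
    (hαβ : stabTo N (α : Matrix (Fin (2 * n)) (Fin (2 * n)) R) =
      (ε : Matrix _ _ R) * stabTo N (β : Matrix (Fin (2 * m)) (Fin (2 * m)) R)) :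
    ∃ t : ℕ, ElemCongr I
      ((stabTo (2 * (n + 1 + t)) (α : Matrix (Fin (2 * n)) (Fin (2 * n)) R))ᵀ *
        chiMat (2 * (n + 1 + t)) R *
          stabTo (2 * (n + 1 + t)) (α : Matrix (Fin (2 * n)) (Fin (2 * n)) R))
      (chiMat (2 * (n + 1 + t)) R) := by
  -- `P` is even and at least `N`, and `P + P` has the shape `2 * (n + 1 + t)`.
  refine ⟨n + 1 + 2 * N, ?_⟩
  set P := n + 1 + (n + 1 + 2 * N)
  have hP : P + P = 2 * (n + 1 + (n + 1 + 2 * N)) := by omega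
  have hPeven : P % 2 = 0 := by omega
  have hαP : (P - 2 * n) + 2 * n = P := by omega
  have hβP : (P - 2 * m) + 2 * m = P := by omega
  have hεP : (P - N) + N = P := by omega
  have hab : stabGL hαP α = stabGL hεP ε * stabGL hβP β := by
    ext1
    rw [Units.val_mul, coe_stabGL, coe_stabGL, coe_stabGL, ← stabTo_stabTo hnN (by omega), hαβ,
      stabTo_mul (by omega), stabTo_stabTo hmN (by omega)]
  have key := (elemCongr_fromBlocks_of_eq_mul (stabGL_mem_congrSubgroup hβP hβI)
    (stabGL_mem_formStabilizer hβP (by omega) hβχ) (stabGL_mem_relElemGroup hεP hε) hab).reindex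
    (blockEquiv hP)
  rwa [← stabTo_transpose_mul_chiMat_mul hP hPeven, reindex_fromBlocks_chiMat hP hPeven,
    coe_stabGL, stabTo_stabTo (by omega) (by omega)] at key

end FinBlocks

end Paper

/-- (exactness of `K₁Sp(R,I) → K₁(R,I) → W'_E(R,I)`), stated at the
level of representatives:  for `α ∈ GL_{2n}(R,I)`, the class of `αᵀ χ_n α` in
`W'_E(R,I)` is trivial if and only if the class of `α` in `K₁(R,I)` comes from a
relative symplectic matrix, i.e. `α` agrees, after stabilization and up to a relative
elementary factor, with some `β ∈ Sp_{2m}(R,I)`. -/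
theorem statement16 (R : Type*) [CommRing R] (I : Ideal R)
    (n : ℕ) (α : GL (Fin (2 * n)) R) (hα : α ∈ GLrel (2 * n) R I) :
    altRel I
        ⟨n, ((α : Matrix (Fin (2 * n)) (Fin (2 * n)) R))ᵀ * chiMat (2 * n) R *
          ((α : Matrix (Fin (2 * n)) (Fin (2 * n)) R))⟩
        (chiE R 1) ↔
      ∃ m : ℕ, ∃ β ∈ Sprel (2 * m) R I, ∃ N : ℕ, 2 * n ≤ N ∧ 2 * m ≤ N ∧
        ∃ ε ∈ Erel N R I,
          stabTo N ((α : Matrix (Fin (2 * n)) (Fin (2 * n)) R)) =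
            ((ε : GL (Fin N) R) : Matrix (Fin N) (Fin N) R) *
              stabTo N ((β : Matrix (Fin (2 * m)) (Fin (2 * m)) R)) := by
  simp only [altRel_chiE_one_iff, mem_Sprel_iff, Erel_eq_relElemGroup]
  constructor
  · rintro ⟨t, h⟩
    obtain ⟨β, hβI, hβχ, ε, hε, hαβ⟩ :=
      exists_stabTo_eq_mul_of_elemCongr (by omega) (mem_congrSubgroup_iff.2 hα) h
    exact ⟨n + 1 + t, β, ⟨hβI, hβχ⟩, _, by omega, by omega, ε, hε, hαβ⟩
  · rintro ⟨m, β, ⟨hβI, hβχ⟩, N, hnN, hmN, ε, hε, hαβ⟩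
    exact exists_elemCongr_of_stabTo_eq_mul hnN hmN hβI hβχ hε hαβ
end
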